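/- arXiv:1502.07294 — 3 statements merged into one kernel-verified Lean document; each statement's English description precedes it below -/
import Mathlib

section
/- For each pair a, b of unit quaternions, the map f_{a,b} : 𝕆 → 𝕆, (x₁,x₂) ↦ (a x₁ a⁻¹, a x₂ b⁻¹) is an ℝ-algebra automorphism of the split Cayley algebra 𝕆. -/
open scoped Quaternion

/-- Multiplication of the split Cayley algebra `𝕆 = ℍ ⊕ ℍ`:
`(x₁,x₂)(y₁,y₂) = (x₁y₁ + y₂·conj(x₂), y₁x₂ + conj(x₁)·y₂)`. -/
noncomputable def octMul (x y : ℍ[ℝ] × ℍ[ℝ]) : ℍ[ℝ] × ℍ[ℝ] :=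
  (x.1 * y.1 + y.2 * star x.2, y.1 * x.2 + star x.1 * y.2)

/-- The map `f_{a,b} : 𝕆 → 𝕆, (x₁,x₂) ↦ (a x₁ a⁻¹, a x₂ b⁻¹)` for unit quaternions `a, b`. -/
noncomputable def fab (a b : ℍ[ℝ]) (p : ℍ[ℝ] × ℍ[ℝ]) : ℍ[ℝ] × ℍ[ℝ] :=
  (a * p.1 * a⁻¹, a * p.2 * b⁻¹)

theorem star_inv_eq_of_mul_star_eq_one {R : Type*} [DivisionRing R] [StarRing R] {a : R}
    (ha : a * star a = 1) : star a⁻¹ = a := by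
  rw [star_inv₀, ← inv_eq_of_mul_eq_one_right ha, inv_inv]

theorem fab_add (a b : ℍ[ℝ]) (p q : ℍ[ℝ] × ℍ[ℝ]) : fab a b (p + q) = fab a b p + fab a b q := by
  simp only [fab, Prod.fst_add, Prod.snd_add, mul_add, add_mul, Prod.mk_add_mk]

theorem fab_smul (a b : ℍ[ℝ]) (c : ℝ) (p : ℍ[ℝ] × ℍ[ℝ]) : fab a b (c • p) = c • fab a b p := by
  simp only [fab, Prod.smul_fst, Prod.smul_snd, mul_smul_comm, smul_mul_assoc, Prod.smul_mk]

section

variable {a b : ℍ[ℝ]}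

theorem fab_leftInverse (ha : a ≠ 0) (hb : b ≠ 0) :
    Function.LeftInverse (fab a⁻¹ b⁻¹) (fab a b) := by
  intro p
  simp only [fab, inv_inv, mul_assoc, inv_mul_cancel_left₀ ha, inv_mul_cancel₀ ha,
    inv_mul_cancel₀ hb, mul_one]

theorem fab_bijective (ha : a ≠ 0) (hb : b ≠ 0) : Function.Bijective (fab a b) := by
  refine ⟨(fab_leftInverse ha hb).injective, ?_⟩
  simpa only [inv_inv] using (fab_leftInverse (inv_ne_zero ha) (inv_ne_zero hb)).surjective

/-- Since `a⁻¹ = conj a` and `conj b⁻¹ = b`, the conjugations in `octMul` turn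
`conj (a x₂ b⁻¹)` into `b conj(x₂) a⁻¹`, after which all inner factors cancel. -/
theorem fab_octMul (ha : a * star a = 1) (hb : b * star b = 1) (p q : ℍ[ℝ] × ℍ[ℝ]) :
    fab a b (octMul p q) = octMul (fab a b p) (fab a b q) := by
  have ha₀ : a ≠ 0 := left_ne_zero_of_mul_eq_one ha
  have hb₀ : b ≠ 0 := left_ne_zero_of_mul_eq_one hb
  have hsa : star a = a⁻¹ := (inv_eq_of_mul_eq_one_right ha).symm
  simp only [fab, octMul, star_mul, hsa, star_inv_eq_of_mul_star_eq_one ha,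
    star_inv_eq_of_mul_star_eq_one hb, mul_add, add_mul, mul_assoc,
    inv_mul_cancel_left₀ ha₀, inv_mul_cancel_left₀ hb₀]

end

/-- For unit quaternions `a, b`, the map `f_{a,b}` is an ℝ-algebra automorphism of the split
Cayley algebra `𝕆`: it is an ℝ-linear bijection and multiplicative. -/
theorem stmt6 (a b : ℍ[ℝ]) (ha : a * star a = 1) (hb : b * star b = 1) :
    Function.Bijective (fab a b) ∧
    (∀ p q : ℍ[ℝ] × ℍ[ℝ], fab a b (octMul p q) = octMul (fab a b p) (fab a b q)) ∧
    (∀ (c : ℝ) (p : ℍ[ℝ] × ℍ[ℝ]), fab a b (c • p) = c • fab a b p) ∧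
    (∀ p q : ℍ[ℝ] × ℍ[ℝ], fab a b (p + q) = fab a b p + fab a b q) :=
  ⟨fab_bijective (left_ne_zero_of_mul_eq_one ha) (left_ne_zero_of_mul_eq_one hb),
    fab_octMul ha hb, fab_smul a b, fab_add a b⟩
end

section
/- For an element x = u + 𝕀v of Spin(4) (with u, v quaternions and 𝕀 = e₁e₂e₃e₄), the spinor norm satisfies N(u + 𝕀v) = u·conj(u) + v·conj(v) + 𝕀(u·conj(v) + v·conj(u)); hence N(x) = 1 if and only if u·conj(u) + v·conj(v) = 1 and u·conj(v) + v·conj(u) = 0, and in that case both u+v and u−v are unit quaternions. -/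
open scoped Quaternion

/-- The negative definite standard quadratic form `-q₄` on `ℝ⁴`. -/
noncomputable def Qneg4 : QuadraticForm ℝ (Fin 4 → ℝ) :=
  QuadraticMap.weightedSumSquares ℝ (fun _ : Fin 4 => (-1 : ℝ))

/-- The image of the `i`-th standard basis vector of `ℝ⁴` in `Cl(4)`. -/
noncomputable def e (i : Fin 4) : CliffordAlgebra Qneg4 :=
  CliffordAlgebra.ι Qneg4 (Pi.single i 1)

/-- The embedding of the quaternions into `Cl(4)⁰`, sending `1, i, j, k` to
`1, e₁e₂, e₂e₃, e₃e₁`. -/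
noncomputable def qmap (x : ℍ[ℝ]) : CliffordAlgebra Qneg4 :=
  algebraMap ℝ _ x.re + x.imI • (e 0 * e 1) + x.imJ • (e 1 * e 2) + x.imK • (e 2 * e 0)

/-- `𝕀 = e₁e₂e₃e₄ ∈ Cl(4)⁰`. -/
noncomputable def I4 : CliffordAlgebra Qneg4 := e 0 * e 1 * e 2 * e 3

/-- The spinor norm `N(x) = x · conj(x)` where `conj` is the Clifford conjugation
`τ ∘ Π = reverse ∘ involute`. -/
noncomputable def spinorNorm (x : CliffordAlgebra Qneg4) : CliffordAlgebra Qneg4 :=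
  x * CliffordAlgebra.reverse (CliffordAlgebra.involute x)

/-! The bivectors `e₀e₁, e₁e₂, e₂e₀` satisfy the quaternion relations, so `qmap` is an
algebra map `ℍ → Cl(4)`. Clifford conjugation acts on its image as quaternion conjugation
and fixes `𝕀`, which commutes with the image and squares to `1`; expanding
`(u + 𝕀v)(ū + 𝕀v̄)` gives the norm formula. The equivalence needs `1, 𝕀` to be independent
over `qmap ℍ`: otherwise `𝕀 = qmap c` with `c² = 1`, so `𝕀 = ±1`, which is impossible since
`𝕀` anticommutes with `e₃`. Finally `(u ± v)(ū ± v̄) = (uū + vv̄) ± (uv̄ + vū)`. -/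

open CliffordAlgebra

lemma Qneg4_single (i : Fin 4) : Qneg4 (Pi.single i 1) = -1 := by
  simp [Qneg4, QuadraticMap.weightedSumSquares_apply, Pi.single_apply]

lemma polar_Qneg4_single {i j : Fin 4} (h : i ≠ j) :
    QuadraticMap.polar Qneg4 (Pi.single i 1) (Pi.single j 1) = 0 := by
  simp [QuadraticMap.polar, Qneg4, QuadraticMap.weightedSumSquares_apply, Pi.single_apply,
    mul_add, mul_ite, Finset.sum_add_distrib, Finset.sum_ite_eq', h, h.symm]

lemma e_mul_self (i : Fin 4) : e i * e i = -1 := by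
  rw [e, ι_sq_scalar, Qneg4_single, map_neg, map_one]

lemma e_mul_e_mul_self (i : Fin 4) (x : CliffordAlgebra Qneg4) : e i * (e i * x) = -x := by
  rw [← mul_assoc, e_mul_self, neg_one_mul]

-- Stated for `j < i` so that `simp (disch := decide)` sorts words in the generators.
lemma e_mul_e_of_lt {i j : Fin 4} (h : j < i) : e i * e j = -(e j * e i) :=
  eq_neg_of_add_eq_zero_left <| by
    rw [e, e, ι_mul_ι_add_swap, polar_Qneg4_single h.ne', map_zero]

lemma e_mul_e_mul_of_lt {i j : Fin 4} (h : j < i) (x : CliffordAlgebra Qneg4) :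
    e i * (e j * x) = -(e j * (e i * x)) := by
  rw [← mul_assoc, e_mul_e_of_lt h, neg_mul, mul_assoc]

noncomputable def quaternionBasis :
    QuaternionAlgebra.Basis (CliffordAlgebra Qneg4) (-1 : ℝ) 0 (-1) where
  i := e 0 * e 1
  j := e 1 * e 2
  k := e 2 * e 0
  i_mul_i := by
    simp (disch := decide) only [mul_assoc, e_mul_self, e_mul_e_mul_of_lt, mul_neg, neg_neg,
      mul_one]
    module
  j_mul_j := by
    simp (disch := decide) only [mul_assoc, e_mul_self, e_mul_e_mul_of_lt, mul_neg, neg_neg,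
      mul_one]
    module
  i_mul_j := by
    simp (disch := decide) only [mul_assoc, e_mul_e_mul_self, e_mul_e_of_lt, mul_neg]
  j_mul_i := by
    simp (disch := decide) only [mul_assoc, e_mul_e_mul_self, e_mul_e_of_lt, e_mul_e_mul_of_lt,
      mul_neg, neg_neg]
    module

-- Its underlying function is `qmap` by definition, since `Basis.lift` is the same formula.
noncomputable def qmapHom : ℍ[ℝ] →ₐ[ℝ] CliffordAlgebra Qneg4 := quaternionBasis.liftHom

lemma qmap_mul (x y : ℍ[ℝ]) : qmap (x * y) = qmap x * qmap y := map_mul qmapHom x y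

lemma qmap_add (x y : ℍ[ℝ]) : qmap (x + y) = qmap x + qmap y := map_add qmapHom x y

lemma qmap_zero : qmap 0 = 0 := map_zero qmapHom

lemma qmap_one : qmap 1 = 1 := map_one qmapHom

lemma qmap_neg (x : ℍ[ℝ]) : qmap (-x) = -qmap x := map_neg qmapHom x

lemma qmap_sub (x y : ℍ[ℝ]) : qmap (x - y) = qmap x - qmap y := map_sub qmapHom x y

lemma qmap_injective : Function.Injective qmap := qmapHom.toRingHom.injective

lemma qmap_algebraMap (r : ℝ) : qmap (algebraMap ℝ ℍ[ℝ] r) = algebraMap ℝ _ r :=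
  qmapHom.commutes r

lemma involute_e (i : Fin 4) : involute (e i) = -e i := involute_ι _

lemma reverse_e (i : Fin 4) : reverse (e i) = e i := reverse_ι _

lemma reverse_involute_e_mul_e (i j : Fin 4) : reverse (involute (e i * e j)) = e j * e i := by
  simp only [map_mul, reverse.map_mul, involute_e, reverse_e, neg_mul_neg]

lemma reverse_involute_qmap (x : ℍ[ℝ]) : reverse (involute (qmap x)) = qmap (star x) := by
  simp only [qmap, map_add, map_smul, AlgHom.commutes, reverse.commutes,
    reverse_involute_e_mul_e, Quaternion.re_star, Quaternion.imI_star, Quaternion.imJ_star,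
    Quaternion.imK_star, neg_smul]
  simp (disch := decide) only [e_mul_e_of_lt, smul_neg, neg_neg]

lemma reverse_involute_I4 : reverse (involute I4) = I4 := by
  simp only [I4, map_mul, reverse.map_mul, involute_e, map_neg, reverse_e, neg_mul_neg]
  simp (disch := decide) only [mul_assoc, e_mul_e_of_lt, e_mul_e_mul_of_lt, neg_mul, mul_neg,
    neg_neg]

lemma I4_mul_I4 : I4 * I4 = 1 := by
  simp (disch := decide) only [I4, mul_assoc, e_mul_self, e_mul_e_mul_of_lt, mul_neg, neg_neg,
    mul_one]

lemma e_mul_I4 (i : Fin 4) : e i * I4 = -(I4 * e i) := by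
  fin_cases i <;> simp only [Fin.zero_eta, Fin.mk_one, Fin.reduceFinMk] <;>
  simp (disch := decide) only [I4, mul_assoc, e_mul_self, e_mul_e_mul_self, e_mul_e_of_lt,
    e_mul_e_mul_of_lt, mul_neg, neg_neg, mul_one]

lemma commute_I4_e_mul_e (i j : Fin 4) : Commute I4 (e i * e j) := by
  rw [Commute, SemiconjBy, mul_assoc, e_mul_I4, mul_neg, ← mul_assoc (e i), e_mul_I4, neg_mul,
    neg_neg, mul_assoc]

lemma commute_I4_qmap (x : ℍ[ℝ]) : Commute I4 (qmap x) :=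
  (((Algebra.commute_algebraMap_right _ _).add_right
    ((commute_I4_e_mul_e 0 1).smul_right _)).add_right
      ((commute_I4_e_mul_e 1 2).smul_right _)).add_right ((commute_I4_e_mul_e 2 0).smul_right _)

lemma add_mul_mul_add_mul_of_mul_self_eq_one {R : Type*} [Ring R] {c a b a' b' : R}
    (hc : c * c = 1) (ha : Commute c a) (hb : Commute c b) :
    (a + c * b) * (a' + c * b') = a * a' + b * b' + c * (a * b' + b * a') := by
  have hab' : a * (c * b') = c * (a * b') := by rw [← mul_assoc, ← ha.eq, mul_assoc]
  have hbb' : c * b * (c * b') = b * b' := by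
    rw [← mul_assoc, mul_assoc c b c, ← hb.eq, ← mul_assoc, hc, one_mul]
  rw [add_mul, mul_add, mul_add, hab', hbb', mul_assoc, mul_add]
  abel

lemma spinorNorm_qmap_add_I4_mul (u v : ℍ[ℝ]) :
    spinorNorm (qmap u + I4 * qmap v) =
      qmap (u * star u + v * star v) + I4 * qmap (u * star v + v * star u) := by
  have hconj :
      reverse (involute (qmap u + I4 * qmap v)) = qmap (star u) + I4 * qmap (star v) := by
    rw [map_add, map_add, map_mul, reverse.map_mul, reverse_involute_qmap, reverse_involute_qmap,
      reverse_involute_I4, (commute_I4_qmap _).eq]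
  rw [spinorNorm, hconj, add_mul_mul_add_mul_of_mul_self_eq_one I4_mul_I4 (commute_I4_qmap u)
    (commute_I4_qmap v)]
  simp only [qmap_add, qmap_mul]

lemma I4_ne_algebraMap (r : ℝ) : I4 ≠ algebraMap ℝ _ r := by
  intro h
  have : IsAddTorsionFree (CliffordAlgebra Qneg4) := .of_isTorsionFree ℝ _
  have hcomm : e 3 * I4 = I4 * e 3 := by rw [h]; exact (Algebra.commutes r (e 3)).symm
  have hzero : I4 * e 3 = 0 := self_eq_neg.mp (hcomm ▸ e_mul_I4 3)
  have he : e 3 = 0 := by rw [← one_mul (e 3), ← I4_mul_I4, mul_assoc, hzero, mul_zero]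
  have hsq := e_mul_self 3
  rw [he, mul_zero, zero_eq_neg] at hsq
  exact one_ne_zero hsq

lemma I4_ne_qmap (c : ℍ[ℝ]) : I4 ≠ qmap c := by
  intro h
  have hc : c * c = 1 := qmap_injective <| by rw [qmap_mul, ← h, I4_mul_I4, qmap_one]
  obtain ⟨r, rfl⟩ : ∃ r : ℝ, c = algebraMap ℝ ℍ[ℝ] r := by
    rcases mul_self_eq_one_iff.mp hc with rfl | rfl
    exacts [⟨1, (map_one _).symm⟩, ⟨-1, by rw [map_neg, map_one]⟩]
  exact I4_ne_algebraMap r (h.trans (qmap_algebraMap r))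

lemma eq_zero_of_qmap_add_I4_mul_eq_zero {a b : ℍ[ℝ]} (h : qmap a + I4 * qmap b = 0) :
    a = 0 ∧ b = 0 := by
  obtain rfl | hb := eq_or_ne b 0
  · rw [qmap_zero, mul_zero, add_zero, ← qmap_zero] at h
    exact ⟨qmap_injective h, rfl⟩
  refine absurd ?_ (I4_ne_qmap (-(a * b⁻¹)))
  calc I4 = I4 * qmap (b * b⁻¹) := by rw [mul_inv_cancel₀ hb, qmap_one, mul_one]
    _ = I4 * qmap b * qmap b⁻¹ := by rw [qmap_mul, mul_assoc]
    _ = qmap (-(a * b⁻¹)) := by rw [eq_neg_of_add_eq_zero_right h, neg_mul, qmap_neg, qmap_mul]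

lemma qmap_add_I4_mul_inj {a b a' b' : ℍ[ℝ]} :
    qmap a + I4 * qmap b = qmap a' + I4 * qmap b' ↔ a = a' ∧ b = b' := by
  refine ⟨fun h => ?_, fun ⟨ha, hb⟩ => ha ▸ hb ▸ rfl⟩
  have := eq_zero_of_qmap_add_I4_mul_eq_zero (a := a - a') (b := b - b') <| by
    rw [qmap_sub, qmap_sub, mul_sub, sub_add_sub_comm, sub_eq_zero.mpr h]
  exact ⟨sub_eq_zero.mp this.1, sub_eq_zero.mp this.2⟩

lemma add_mul_star_add {R : Type*} [Ring R] [StarRing R] (u v : R) :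
    (u + v) * star (u + v) = u * star u + v * star v + (u * star v + v * star u) := by
  rw [star_add]; noncomm_ring

lemma sub_mul_star_sub {R : Type*} [Ring R] [StarRing R] (u v : R) :
    (u - v) * star (u - v) = u * star u + v * star v - (u * star v + v * star u) := by
  rw [star_sub]; noncomm_ring

/-- `N(u + 𝕀v) = u·conj(u) + v·conj(v) + 𝕀(u·conj(v) + v·conj(u))`; hence `N(x) = 1` iff
`u·conj(u) + v·conj(v) = 1` and `u·conj(v) + v·conj(u) = 0`, and in that case both `u+v`
and `u−v` are unit quaternions. -/
theorem stmt8 (u v : ℍ[ℝ]) :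
    spinorNorm (qmap u + I4 * qmap v) =
      qmap (u * star u + v * star v) + I4 * qmap (u * star v + v * star u) ∧
    (spinorNorm (qmap u + I4 * qmap v) = 1 ↔
      (u * star u + v * star v = 1 ∧ u * star v + v * star u = 0)) ∧
    (spinorNorm (qmap u + I4 * qmap v) = 1 →
      (u + v) * star (u + v) = 1 ∧ (u - v) * star (u - v) = 1) := by
  have hnorm := spinorNorm_qmap_add_I4_mul u v
  have hunit : spinorNorm (qmap u + I4 * qmap v) = 1 ↔
      (u * star u + v * star v = 1 ∧ u * star v + v * star u = 0) := by
    rw [hnorm, ← qmap_add_I4_mul_inj, qmap_one, qmap_zero, mul_zero, add_zero]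
  refine ⟨hnorm, hunit, fun h => ?_⟩
  obtain ⟨hsum, hcross⟩ := hunit.mp h
  rw [add_mul_star_add, sub_mul_star_sub, hsum, hcross, add_zero, sub_zero]
  exact ⟨rfl, rfl⟩
end

section
/- In the spin-extended Weyl group W^spin(Π) defined by generators r₁,…,r_n and relations (R1) r_i⁸ = 1, (R2) r_j⁻¹ r_i² r_j = r_i² r_j^{2n(i,j)}, (R3) braid relations of length m_{ij}, the following hold for all i ≠ j: (a) [r_i², r_j²] = r_j^{4n(i,j)} and r_i^{4n(j,i)} = r_j^{4n(i,j)}; (b) if n(i,j) = n(j,i) = 1 then r_i⁴ = r_j⁴, otherwise r_i² and r_j² commute; (c) if n(i,j) = 0 and n(j,i) = 1 then r_i⁴ = 1; (d) r_j commutes with r_i⁴. Consequently the subgroup generated by {r_i⁴ : i ∈ I} is central in W^spin(Π). -/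
/-- `n(i,j)`: `0` if `a(i,j)` is even, `1` if `a(i,j)` is odd. -/
def nPar (a : ℤ) : ℕ := if Even a then 0 else 1

/-- `m_{ij}`: `2, 3, 4, 6` according as `a(i,j)a(j,i) = 0, 1, 2, 3`, and `0` (no braid
relation) if `a(i,j)a(j,i) ≥ 4`. -/
def mOf (c : ℤ) : ℕ :=
  if c = 0 then 2 else if c = 1 then 3 else if c = 2 then 4 else if c = 3 then 6 else 0

/-- The alternating word `r_i r_j r_i ⋯` of length `m` in the free group. -/
def braidWord {I : Type*} : ℕ → I → I → FreeGroup I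
  | 0, _, _ => 1
  | (m + 1), i, j => FreeGroup.of i * braidWord m j i

/-- The relators (R1), (R2), (R3) of the spin-extended Weyl group. -/
def spinRels {I : Type*} (A : I → I → ℤ) : Set (FreeGroup I) :=
  {x | ∃ i : I, x = FreeGroup.of i ^ 8} ∪
  {x | ∃ i j : I, i ≠ j ∧
    x = ((FreeGroup.of j)⁻¹ * (FreeGroup.of i) ^ 2 * FreeGroup.of j) *
      ((FreeGroup.of i) ^ 2 * (FreeGroup.of j) ^ (2 * nPar (A i j)))⁻¹} ∪
  {x | ∃ i j : I, i ≠ j ∧ mOf (A i j * A j i) ≠ 0 ∧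
    x = braidWord (mOf (A i j * A j i)) i j * (braidWord (mOf (A i j * A j i)) j i)⁻¹}

/-- The spin-extended Weyl group `W^spin(Π)` presented by generators `r_i` and relations
(R1) `r_i⁸ = 1`, (R2) `r_j⁻¹ r_i² r_j = r_i² r_j^{2n(i,j)}`, (R3) braid relations. -/
abbrev Wspin {I : Type*} (A : I → I → ℤ) := PresentedGroup (spinRels A)

/-- The generator `r_i` of `W^spin(Π)`. -/
def rgen {I : Type*} (A : I → I → ℤ) (i : I) : Wspin A :=
  PresentedGroup.of (rels := spinRels A) i

/-
Write `a = r_i`, `b = r_j`, `c = a²` and `k = 2n(i,j)`. Relation (R2) says `b⁻¹ c b = c bᵏ`;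
iterating, `b⁻² c b² = c b^{2k}`, which is the commutator identity of (a). Since `[c, b²]` and
`[b², c]` are mutually inverse and `b^{4n(i,j)}` is an involution by (R1), the second identity
of (a) follows, and (b), (c) are its case analysis. For (d), conjugation by `bᵏ` gives
`bᵏ c = c b^{k - k²}`, so `b⁻¹ c² b = (c bᵏ)² = c² b^{2k - k²} = c²` because `k ∈ {0, 2}`.
As the `r_j` generate `W^spin(Π)`, every `r_i⁴ = c²` is central.
-/

section GroupLemmas

variable {G : Type*} [Group G] {b c : G} {k : ℕ}

lemma conj_pow_eq_mul_pow (h : b⁻¹ * c * b = c * b ^ k) (m : ℕ) :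
    (b ^ m)⁻¹ * c * b ^ m = c * b ^ (m * k) := by
  induction m with
  | zero => simp
  | succ m ih =>
    calc (b ^ (m + 1))⁻¹ * c * b ^ (m + 1) = b⁻¹ * ((b ^ m)⁻¹ * c * b ^ m) * b := by group
      _ = (b⁻¹ * c * b) * b ^ (m * k) := by rw [ih]; group
      _ = c * b ^ ((m + 1) * k) := by rw [h, mul_assoc, ← pow_add, add_one_mul, add_comm]

lemma inv_mul_inv_mul_mul_sq_eq_pow (h : b⁻¹ * c * b = c * b ^ k) :
    c⁻¹ * (b ^ 2)⁻¹ * c * b ^ 2 = b ^ (2 * k) :=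
  calc c⁻¹ * (b ^ 2)⁻¹ * c * b ^ 2 = c⁻¹ * ((b ^ 2)⁻¹ * c * b ^ 2) := by group
    _ = b ^ (2 * k) := by rw [conj_pow_eq_mul_pow h 2, inv_mul_cancel_left]

lemma conj_sq_eq_sq_of_conj_eq_mul_pow (h : b⁻¹ * c * b = c * b ^ k)
    (hk : b ^ (k * k) = b ^ (2 * k)) : b⁻¹ * c ^ 2 * b = c ^ 2 := by
  have hswap : b ^ k * c = c * b ^ k * (b ^ (k * k))⁻¹ :=
    calc b ^ k * c = b ^ k * (c * b ^ (k * k)) * (b ^ (k * k))⁻¹ := by group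
      _ = b ^ k * ((b ^ k)⁻¹ * c * b ^ k) * (b ^ (k * k))⁻¹ := by rw [conj_pow_eq_mul_pow h k]
      _ = c * b ^ k * (b ^ (k * k))⁻¹ := by group
  calc b⁻¹ * c ^ 2 * b = (b⁻¹ * c * b) * (b⁻¹ * c * b) := by rw [sq]; group
    _ = c * (b ^ k * c) * b ^ k := by rw [h]; group
    _ = c ^ 2 * (b ^ (k * k))⁻¹ * b ^ (2 * k) := by rw [hswap, sq, two_mul, pow_add]; group
    _ = c ^ 2 := by rw [hk]; group

lemma pow_four_mul_pow_four_eq_one (hb : b ^ 8 = 1) (n : ℕ) :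
    b ^ (4 * n) * b ^ (4 * n) = 1 := by
  rw [← pow_add, show 4 * n + 4 * n = 8 * n by ring, pow_mul, hb, one_pow]

lemma mem_center_of_forall_mul_comm {s : Set G} (hs : Subgroup.closure s = ⊤) {x : G}
    (hx : ∀ g ∈ s, g * x = x * g) : x ∈ Subgroup.center G := by
  rw [← Subgroup.centralizer_univ, ← Subgroup.coe_top, ← hs, Subgroup.centralizer_closure]
  exact Subgroup.mem_centralizer_iff.mpr hx

end GroupLemmas

lemma nPar_eq_zero_or_one (a : ℤ) : nPar a = 0 ∨ nPar a = 1 := by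
  unfold nPar; split <;> simp

section Wspin

variable {I : Type*} (A : I → I → ℤ) {i j : I}

lemma mk_eq_one_of_mem_spinRels {r : FreeGroup I} (h : r ∈ spinRels A) :
    PresentedGroup.mk (spinRels A) r = 1 :=
  (QuotientGroup.eq_one_iff _).mpr (Subgroup.subset_normalClosure h)

lemma rgen_pow_eight (i : I) : rgen A i ^ 8 = 1 := by
  simpa [rgen, PresentedGroup.of] using mk_eq_one_of_mem_spinRels A (Or.inl (Or.inl ⟨i, rfl⟩))

lemma rgen_conj_sq (h : i ≠ j) :
    (rgen A j)⁻¹ * rgen A i ^ 2 * rgen A j = rgen A i ^ 2 * rgen A j ^ (2 * nPar (A i j)) := by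
  rw [← mul_inv_eq_one]
  simpa [rgen, PresentedGroup.of] using
    mk_eq_one_of_mem_spinRels A (Or.inl (Or.inr ⟨i, j, h, rfl⟩))

lemma rgen_commutator_sq (h : i ≠ j) :
    (rgen A i ^ 2)⁻¹ * (rgen A j ^ 2)⁻¹ * rgen A i ^ 2 * rgen A j ^ 2 =
      rgen A j ^ (4 * nPar (A i j)) := by
  rw [inv_mul_inv_mul_mul_sq_eq_pow (rgen_conj_sq A h), ← mul_assoc]
  rfl

lemma rgen_pow_four_nPar_eq (h : i ≠ j) :
    rgen A i ^ (4 * nPar (A j i)) = rgen A j ^ (4 * nPar (A i j)) := by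
  have hinv : rgen A i ^ (4 * nPar (A j i)) = (rgen A j ^ (4 * nPar (A i j)))⁻¹ := by
    rw [← rgen_commutator_sq A h, ← rgen_commutator_sq A h.symm]
    group
  rw [hinv, inv_eq_of_mul_eq_one_left (pow_four_mul_pow_four_eq_one (rgen_pow_eight A j) _)]

lemma rgen_pow_four_eq_of_nPar_eq_one (h : i ≠ j) (hij : nPar (A i j) = 1)
    (hji : nPar (A j i) = 1) : rgen A i ^ 4 = rgen A j ^ 4 := by
  simpa [hij, hji] using rgen_pow_four_nPar_eq A h

lemma rgen_pow_four_eq_one (h : i ≠ j) (hij : nPar (A i j) = 0) (hji : nPar (A j i) = 1) :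
    rgen A i ^ 4 = 1 := by
  simpa [hij, hji] using rgen_pow_four_nPar_eq A h

lemma rgen_sq_mul_comm (h : i ≠ j) (hn : ¬(nPar (A i j) = 1 ∧ nPar (A j i) = 1)) :
    rgen A i ^ 2 * rgen A j ^ 2 = rgen A j ^ 2 * rgen A i ^ 2 := by
  have hcomm : rgen A j ^ (4 * nPar (A i j)) = 1 := by
    rcases nPar_eq_zero_or_one (A i j) with hij | hij
    · simp [hij]
    · rcases nPar_eq_zero_or_one (A j i) with hji | hji
      · simpa [hji] using (rgen_pow_four_nPar_eq A h).symm
      · exact absurd ⟨hij, hji⟩ hn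
  rw [← rgen_commutator_sq A h] at hcomm
  calc rgen A i ^ 2 * rgen A j ^ 2
      = rgen A j ^ 2 * rgen A i ^ 2 *
          ((rgen A i ^ 2)⁻¹ * (rgen A j ^ 2)⁻¹ * rgen A i ^ 2 * rgen A j ^ 2) := by group
    _ = rgen A j ^ 2 * rgen A i ^ 2 := by rw [hcomm, mul_one]

lemma rgen_mul_pow_four_comm (i j : I) : rgen A j * rgen A i ^ 4 = rgen A i ^ 4 * rgen A j := by
  by_cases hij : i = j
  · rw [hij, ← pow_succ', pow_succ]
  have hk : rgen A j ^ (2 * nPar (A i j) * (2 * nPar (A i j))) =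
      rgen A j ^ (2 * (2 * nPar (A i j))) := by
    rcases nPar_eq_zero_or_one (A i j) with hn | hn <;> rw [hn]
  have hconj : (rgen A j)⁻¹ * rgen A i ^ 4 * rgen A j = rgen A i ^ 4 := by
    simpa only [← pow_mul] using conj_sq_eq_sq_of_conj_eq_mul_pow (rgen_conj_sq A hij) hk
  nth_rewrite 1 [← hconj]
  group

lemma rgen_pow_four_mem_center (i : I) : rgen A i ^ 4 ∈ Subgroup.center (Wspin A) :=
  mem_center_of_forall_mul_comm (PresentedGroup.closure_range_of (spinRels A)) <| by
    rintro _ ⟨j, rfl⟩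
    exact rgen_mul_pow_four_comm A i j

end Wspin

theorem stmt18_general {I : Type*} (A : I → I → ℤ) :
    (∀ i j : I, i ≠ j →
      ((rgen A i ^ 2)⁻¹ * (rgen A j ^ 2)⁻¹ * rgen A i ^ 2 * rgen A j ^ 2 =
          rgen A j ^ (4 * nPar (A i j)) ∧
        rgen A i ^ (4 * nPar (A j i)) = rgen A j ^ (4 * nPar (A i j))) ∧
      ((nPar (A i j) = 1 ∧ nPar (A j i) = 1) → rgen A i ^ 4 = rgen A j ^ 4) ∧
      (¬(nPar (A i j) = 1 ∧ nPar (A j i) = 1) →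
        rgen A i ^ 2 * rgen A j ^ 2 = rgen A j ^ 2 * rgen A i ^ 2) ∧
      ((nPar (A i j) = 0 ∧ nPar (A j i) = 1) → rgen A i ^ 4 = 1) ∧
      (rgen A j * rgen A i ^ 4 = rgen A i ^ 4 * rgen A j)) ∧
    Subgroup.closure {x : Wspin A | ∃ i : I, x = rgen A i ^ 4} ≤
      Subgroup.center (Wspin A) := by
  refine ⟨fun i j h => ⟨⟨rgen_commutator_sq A h, rgen_pow_four_nPar_eq A h⟩,
    fun hn => rgen_pow_four_eq_of_nPar_eq_one A h hn.1 hn.2, rgen_sq_mul_comm A h,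
    fun hn => rgen_pow_four_eq_one A h hn.1 hn.2, rgen_mul_pow_four_comm A i j⟩, ?_⟩
  rw [Subgroup.closure_le]
  rintro _ ⟨i, rfl⟩
  exact rgen_pow_four_mem_center A i

/-- In `W^spin(Π)` of a generalized Cartan matrix `A`, for all `i ≠ j`:
(a) `[r_i², r_j²] = r_j^{4n(i,j)}` and `r_i^{4n(j,i)} = r_j^{4n(i,j)}`;
(b) if `n(i,j) = n(j,i) = 1` then `r_i⁴ = r_j⁴`, otherwise `r_i²` and `r_j²` commute;
(c) if `n(i,j) = 0` and `n(j,i) = 1` then `r_i⁴ = 1`;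
(d) `r_j` commutes with `r_i⁴`.
Consequently the subgroup generated by the `r_i⁴` is central. -/
theorem stmt18 {I : Type*} (A : I → I → ℤ)
    (hdiag : ∀ i, A i i = 2)
    (hoff : ∀ i j, i ≠ j → A i j ≤ 0)
    (hzero : ∀ i j, i ≠ j → (A i j = 0 → A j i = 0)) :
    (∀ i j : I, i ≠ j →
      ((rgen A i ^ 2)⁻¹ * (rgen A j ^ 2)⁻¹ * rgen A i ^ 2 * rgen A j ^ 2 =
          rgen A j ^ (4 * nPar (A i j)) ∧
        rgen A i ^ (4 * nPar (A j i)) = rgen A j ^ (4 * nPar (A i j))) ∧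
      ((nPar (A i j) = 1 ∧ nPar (A j i) = 1) → rgen A i ^ 4 = rgen A j ^ 4) ∧
      (¬(nPar (A i j) = 1 ∧ nPar (A j i) = 1) →
        rgen A i ^ 2 * rgen A j ^ 2 = rgen A j ^ 2 * rgen A i ^ 2) ∧
      ((nPar (A i j) = 0 ∧ nPar (A j i) = 1) → rgen A i ^ 4 = 1) ∧
      (rgen A j * rgen A i ^ 4 = rgen A i ^ 4 * rgen A j)) ∧
    Subgroup.closure {x : Wspin A | ∃ i : I, x = rgen A i ^ 4} ≤
      Subgroup.center (Wspin A) :=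
  stmt18_general A
end
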